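/- arXiv:1304.3072 — 3 statements merged into one kernel-verified Lean document; each statement's English description precedes it below -/
import Mathlib

section
/- Let d ≥ 1 be an integer, let m > 2 be a real number, and let M ≥ 0. Suppose f : ℝ^d → ℝ is measurable with f ≥ 0 almost everywhere, ∫_{ℝ^d} f dx = 1, and ∫_{ℝ^d} f^m dx ≤ m(M+1). Then ∫_{ℝ^d} (f − 1)_+ dx ≤ 2·√((M+1)/m). -/
/-!
On `{f > 1}` Bernoulli's inequality gives `(m/2) (f - 1) ≤ f^(m/2)`, so the excess mass is at most
`(2/m) ∫_{f>1} f^(m/2)`. Cauchy–Schwarz bounds this by `(2/m) (∫ f^m)^(1/2) |{f > 1}|^(1/2)`, and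
Markov's inequality with `∫ f = 1` gives `|{f > 1}| ≤ 1`.
-/

open MeasureTheory ENNReal

theorem sub_one_le_rpow_div {p x : ℝ} (hp : 1 ≤ p) (hx : 0 ≤ x) : x - 1 ≤ x ^ p / p := by
  have bernoulli := one_add_mul_self_le_rpow_one_add (by linarith : -1 ≤ x - 1) hp
  rw [add_sub_cancel] at bernoulli
  rw [le_div_iff₀ (by linarith)]
  nlinarith [Real.rpow_nonneg hx p]

theorem ENNReal.ofReal_rpow_half (a : ℝ) :
    ENNReal.ofReal a ^ (1 / 2 : ℝ) = ENNReal.ofReal √a := by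
  rcases le_total 0 a with ha | ha
  · rw [ofReal_rpow_of_nonneg ha (by norm_num), Real.sqrt_eq_rpow, one_div]
  · rw [ofReal_of_nonpos ha, Real.sqrt_eq_zero'.2 ha, ofReal_zero, zero_rpow_of_pos (by norm_num)]

theorem div_mul_sqrt_mul_eq_mul_sqrt_div (c : ℝ) {m : ℝ} (hm : 0 < m) (a : ℝ) :
    c / m * √(m * a) = c * √(a / m) := by
  rw [Real.sqrt_div' _ hm.le, Real.sqrt_mul hm.le]
  field_simp
  rw [Real.sq_sqrt hm.le]

section

variable {α : Type*} [MeasurableSpace α] {μ : Measure α}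

theorem setLIntegral_le_sqrt_lintegral_sq_mul_sqrt_measure {g : α → ℝ≥0∞}
    (hg : AEMeasurable g μ) (s : Set α) :
    ∫⁻ x in s, g x ∂μ ≤ (∫⁻ x, g x ^ (2 : ℝ) ∂μ) ^ (1 / 2 : ℝ) * μ s ^ (1 / 2 : ℝ) := by
  have cauchy_schwarz := lintegral_mul_le_Lp_mul_Lq (μ.restrict s) Real.HolderConjugate.two_two
    hg.restrict (aemeasurable_const (b := (1 : ℝ≥0∞)))
  simp only [Pi.mul_apply, mul_one, one_rpow, lintegral_const, one_mul,
    Measure.restrict_apply_univ] at cauchy_schwarz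
  refine cauchy_schwarz.trans ?_
  gcongr
  exact Measure.restrict_le_self

theorem measure_one_lt_le_lintegral_ofReal {f : α → ℝ} (hf : Measurable f) :
    μ {x | 1 < f x} ≤ ∫⁻ x, ENNReal.ofReal (f x) ∂μ := by
  have markov := mul_meas_ge_le_lintegral₀ hf.ennreal_ofReal.aemeasurable (μ := μ) 1
  rw [one_mul] at markov
  exact (measure_mono fun x hx => ENNReal.one_le_ofReal.2 (le_of_lt hx)).trans markov

theorem lintegral_ofReal_max_sub_one_le {f : α → ℝ} (hf : Measurable f)
    (hpos : ∀ᵐ x ∂μ, 0 ≤ f x) {q : ℝ} (hq : 2 ≤ q) :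
    ∫⁻ x, ENNReal.ofReal (max (f x - 1) 0) ∂μ ≤ ENNReal.ofReal (2 / q) *
      ((∫⁻ x, ENNReal.ofReal (f x ^ q) ∂μ) ^ (1 / 2 : ℝ) *
        (∫⁻ x, ENNReal.ofReal (f x) ∂μ) ^ (1 / 2 : ℝ)) := by
  set s := {x | 1 < f x}
  have hs : MeasurableSet s := measurableSet_lt measurable_const hf
  have excess_le : ∀ᵐ x ∂μ, ENNReal.ofReal (max (f x - 1) 0) ≤
      s.indicator (fun x => ENNReal.ofReal (2 / q) * ENNReal.ofReal (f x ^ (q / 2))) x := by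
    filter_upwards [hpos] with x hx
    by_cases hxs : x ∈ s
    · rw [s.indicator_of_mem hxs, ← ofReal_mul (by positivity),
        max_eq_left (sub_nonneg.2 hxs.le)]
      refine ofReal_le_ofReal ((sub_one_le_rpow_div (p := q / 2) (by linarith) hx).trans_eq ?_)
      field_simp
    · rw [s.indicator_of_notMem hxs, max_eq_right (sub_nonpos.2 (not_lt.1 hxs)), ofReal_zero]
  have sq_eq : ∀ᵐ x ∂μ,
      ENNReal.ofReal (f x ^ (q / 2)) ^ (2 : ℝ) = ENNReal.ofReal (f x ^ q) := by
    filter_upwards [hpos] with x hx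
    rw [ofReal_rpow_of_nonneg (by positivity) zero_le_two, ← Real.rpow_mul hx,
      div_mul_cancel₀ _ two_ne_zero]
  calc ∫⁻ x, ENNReal.ofReal (max (f x - 1) 0) ∂μ
      ≤ ∫⁻ x in s, ENNReal.ofReal (2 / q) * ENNReal.ofReal (f x ^ (q / 2)) ∂μ := by
        rw [← lintegral_indicator hs]
        exact lintegral_mono_ae excess_le
    _ = ENNReal.ofReal (2 / q) * ∫⁻ x in s, ENNReal.ofReal (f x ^ (q / 2)) ∂μ :=
        lintegral_const_mul _ (hf.pow_const _).ennreal_ofReal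
    _ ≤ _ := by
        grw [setLIntegral_le_sqrt_lintegral_sq_mul_sqrt_measure
          (hf.pow_const _).ennreal_ofReal.aemeasurable, lintegral_congr_ae sq_eq,
          measure_one_lt_le_lintegral_ofReal hf]

end

theorem excess_mass_estimate_general (d : ℕ) (m M : ℝ) (hm : 2 < m)
    (f : EuclideanSpace ℝ (Fin d) → ℝ) (hmeas : Measurable f)
    (hpos : ∀ᵐ x ∂volume, 0 ≤ f x)
    (hmass : ∫⁻ x, ENNReal.ofReal (f x) ∂volume = 1)
    (hpow : ∫⁻ x, ENNReal.ofReal (f x ^ m) ∂volume ≤ ENNReal.ofReal (m * (M + 1))) :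
    ∫⁻ x, ENNReal.ofReal (max (f x - 1) 0) ∂volume
      ≤ ENNReal.ofReal (2 * Real.sqrt ((M + 1) / m)) := by
  calc ∫⁻ x, ENNReal.ofReal (max (f x - 1) 0) ∂volume
      ≤ ENNReal.ofReal (2 / m) *
          (ENNReal.ofReal (m * (M + 1)) ^ (1 / 2 : ℝ) * 1 ^ (1 / 2 : ℝ)) := by
        grw [lintegral_ofReal_max_sub_one_le hmeas hpos hm.le, hpow, hmass]
    _ = ENNReal.ofReal (2 * Real.sqrt ((M + 1) / m)) := by
        rw [one_rpow, mul_one, ofReal_rpow_half, ← ofReal_mul (by positivity),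
          div_mul_sqrt_mul_eq_mul_sqrt_div 2 (by linarith)]

/-- Lemma 4.1 of the paper (core estimate): if `f ≥ 0` has total mass 1 and
`∫ f^m ≤ m(M+1)`, then the excess mass above level 1 is at most `2√((M+1)/m)`. -/
theorem excess_mass_estimate (d : ℕ) (hd : 1 ≤ d) (m M : ℝ) (hm : 2 < m) (hM : 0 ≤ M)
    (f : EuclideanSpace ℝ (Fin d) → ℝ) (hmeas : Measurable f)
    (hpos : ∀ᵐ x ∂volume, 0 ≤ f x)
    (hmass : ∫⁻ x, ENNReal.ofReal (f x) ∂volume = 1)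
    (hpow : ∫⁻ x, ENNReal.ofReal (f x ^ m) ∂volume ≤ ENNReal.ofReal (m * (M + 1))) :
    ∫⁻ x, ENNReal.ofReal (max (f x - 1) 0) ∂volume
      ≤ ENNReal.ofReal (2 * Real.sqrt ((M + 1) / m)) :=
  excess_mass_estimate_general d m M hm f hmeas hpos hmass hpow
end

section
/- Let d ≥ 1 be an integer, let m > 2 be a real number, and let M ≥ 0. Suppose f : ℝ^d → ℝ is measurable with f ≥ 0 almost everywhere, ∫_{ℝ^d} f dx = 1, and ∫_{ℝ^d} f^m dx ≤ m(M+1). Then ∫_{ℝ^d} (f − 1)_+^2 dx ≤ 2(M+1)/(m−1). -/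
/-!
On `{f > 1}` the second-order Bernoulli inequality `t ^ m ≥ m (m - 1) / 2 * (t - 1) ^ 2`, valid
for `t ≥ 1` and `m ≥ 2`, gives `(f - 1)₊ ^ 2 ≤ 2 / (m (m - 1)) * f ^ m` pointwise; integrating and
using `∫ f ^ m ≤ m (M + 1)` yields the bound `2 (M + 1) / (m - 1)`.
-/

open MeasureTheory Set

theorem one_add_mul_add_sq_le_rpow {p : ℝ} (hp : 2 ≤ p) {t : ℝ} (ht : 1 ≤ t) :
    1 + p * (t - 1) + p * (p - 1) / 2 * (t - 1) ^ 2 ≤ t ^ p := by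
  set g : ℝ → ℝ := fun t => t ^ p - 1 - p * (t - 1) - p * (p - 1) / 2 * (t - 1) ^ 2
  have hg : ∀ t, HasDerivAt g (p * (t ^ (p - 1) - (1 + (p - 1) * (t - 1)))) t := by
    intro t
    have h := ((((Real.hasDerivAt_rpow_const (x := t) (Or.inr (by linarith : 1 ≤ p))).sub_const
      1).sub (((hasDerivAt_id t).sub_const 1).const_mul p)).sub
      ((((hasDerivAt_id t).sub_const 1).pow 2).const_mul (p * (p - 1) / 2)))
    refine h.congr_deriv ?_
    simp only [id]
    push_cast
    ring
  -- The derivative is nonnegative by the first-order Bernoulli inequality with exponent `p - 1`.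
  have hg_mono : MonotoneOn g (Ici 1) := by
    refine monotoneOn_of_hasDerivWithinAt_nonneg (convex_Ici 1)
      (fun x _ => (hg x).continuousAt.continuousWithinAt) (fun x _ => (hg x).hasDerivWithinAt) ?_
    intro x hx
    rw [interior_Ici, mem_Ioi] at hx
    have hbern := one_add_mul_self_le_rpow_one_add (by linarith : -1 ≤ x - 1)
      (by linarith : 1 ≤ p - 1)
    rw [add_sub_cancel] at hbern
    exact mul_nonneg (by linarith) (sub_nonneg.mpr hbern)
  have := hg_mono (self_mem_Ici) ht ht
  simp only [g, Real.one_rpow] at this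
  linarith

theorem sq_max_sub_one_zero_le_rpow {p : ℝ} (hp : 2 ≤ p) {t : ℝ} (ht : 0 ≤ t) :
    max (t - 1) 0 ^ 2 ≤ 2 / (p * (p - 1)) * t ^ p := by
  have hpp : 0 < p * (p - 1) := by nlinarith
  rcases le_or_gt t 1 with h | h
  · rw [max_eq_right (by linarith)]
    have := Real.rpow_nonneg ht p
    norm_num
    positivity
  · rw [max_eq_left (by linarith), div_mul_eq_mul_div, le_div_iff₀ hpp]
    nlinarith [one_add_mul_add_sq_le_rpow hp h.le]

theorem lintegral_sq_max_sub_one_zero_le {α : Type*} [MeasurableSpace α] (μ : Measure α)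
    {f : α → ℝ} (hf : ∀ᵐ x ∂μ, 0 ≤ f x) {p : ℝ} (hp : 2 ≤ p) :
    ∫⁻ x, ENNReal.ofReal (max (f x - 1) 0 ^ 2) ∂μ
      ≤ ENNReal.ofReal (2 / (p * (p - 1))) * ∫⁻ x, ENNReal.ofReal (f x ^ p) ∂μ := by
  have hc : 0 ≤ 2 / (p * (p - 1)) := div_nonneg zero_le_two (by nlinarith)
  rw [← lintegral_const_mul' _ _ ENNReal.ofReal_ne_top]
  refine lintegral_mono_ae (hf.mono fun x hx => ?_)
  rw [← ENNReal.ofReal_mul hc]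
  exact ENNReal.ofReal_le_ofReal (sq_max_sub_one_zero_le_rpow hp hx)

theorem excess_mass_L2_estimate_general (d : ℕ) (m M : ℝ) (hm : 2 < m)
    (f : EuclideanSpace ℝ (Fin d) → ℝ)
    (hpos : ∀ᵐ x ∂volume, 0 ≤ f x)
    (hpow : ∫⁻ x, ENNReal.ofReal (f x ^ m) ∂volume ≤ ENNReal.ofReal (m * (M + 1))) :
    ∫⁻ x, ENNReal.ofReal ((max (f x - 1) 0) ^ 2) ∂volume
      ≤ ENNReal.ofReal (2 * (M + 1) / (m - 1)) := by
  have hc : 0 ≤ 2 / (m * (m - 1)) := div_nonneg zero_le_two (by nlinarith)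
  calc ∫⁻ x, ENNReal.ofReal ((max (f x - 1) 0) ^ 2)
      ≤ ENNReal.ofReal (2 / (m * (m - 1))) * ∫⁻ x, ENNReal.ofReal (f x ^ m) :=
        lintegral_sq_max_sub_one_zero_le volume hpos hm.le
    _ ≤ ENNReal.ofReal (2 / (m * (m - 1))) * ENNReal.ofReal (m * (M + 1)) := by gcongr
    _ = ENNReal.ofReal (2 * (M + 1) / (m - 1)) := by
        rw [← ENNReal.ofReal_mul hc]
        congr 1
        field_simp [(by linarith : m ≠ 0), (by linarith : m - 1 ≠ 0)]

/-- Intermediate L² estimate from the proof of Lemma 4.1 of the paper. -/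
theorem excess_mass_L2_estimate (d : ℕ) (hd : 1 ≤ d) (m M : ℝ) (hm : 2 < m) (hM : 0 ≤ M)
    (f : EuclideanSpace ℝ (Fin d) → ℝ) (hmeas : Measurable f)
    (hpos : ∀ᵐ x ∂volume, 0 ≤ f x)
    (hmass : ∫⁻ x, ENNReal.ofReal (f x) ∂volume = 1)
    (hpow : ∫⁻ x, ENNReal.ofReal (f x ^ m) ∂volume ≤ ENNReal.ofReal (m * (M + 1))) :
    ∫⁻ x, ENNReal.ofReal ((max (f x - 1) 0) ^ 2) ∂volume
      ≤ ENNReal.ofReal (2 * (M + 1) / (m - 1)) :=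
  excess_mass_L2_estimate_general d m M hm f hpos hpow
end

section
/- Let 0 < h ≤ 1, let δ be a real number with 0 ≤ δ ≤ h^{3/2}, let M ≥ 0, and let N ≥ 1 be an integer. Let (a_k)_{k≥1} be a sequence of nonnegative real numbers with ∑_{k=1}^{N−1} a_k ≤ M, and let (d_n)_{n≥1} be a sequence of nonnegative real numbers satisfying d_1 ≤ δ and d_n ≤ √(d_{n−1}² + h·a_{n−1}) + δ for all 2 ≤ n ≤ N. Then d_N² ≤ e^{Nh}·(h³ + 2Mh + 2Nh²). -/
/-!
Squaring the recursion with the weighted inequality `(s + t)² ≤ (1 + h) s² + (1 + 1/h) t²`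
and using `δ² ≤ h³` turns it into the linear recursion
`d_{n+1}² ≤ (1 + h) d_n² + 2 h a_n + 2 h²`.
The discrete Gronwall inequality then bounds `d_N²` by `(1 + h)^(N-1) ≤ e^{Nh}` times
`d_1² + 2h ∑ a_k + 2(N-1)h²`.
-/

open Finset

theorem add_sq_le_one_add_mul_sq_add_one_add_inv_mul_sq {h : ℝ} (hh : 0 < h) (s t : ℝ) :
    (s + t) ^ 2 ≤ (1 + h) * s ^ 2 + (1 + h⁻¹) * t ^ 2 := by
  have hcross : 2 * s * t ≤ h * s ^ 2 + h⁻¹ * t ^ 2 := by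
    have := sq_nonneg (h * s - t)
    rw [← mul_le_mul_iff_of_pos_left hh]
    field_simp
    nlinarith
  nlinarith

theorem sq_le_pow_three_of_le_rpow {h δ : ℝ} (hh : 0 ≤ h) (hδ0 : 0 ≤ δ)
    (hδ : δ ≤ h ^ ((3 : ℝ) / 2)) : δ ^ 2 ≤ h ^ 3 := by
  calc δ ^ 2 ≤ (h ^ ((3 : ℝ) / 2)) ^ 2 := pow_le_pow_left₀ hδ0 hδ 2
    _ = h ^ 3 := by rw [← Real.rpow_mul_natCast hh]; norm_num

theorem one_add_pow_le_exp_mul {x : ℝ} (hx : 0 ≤ x) (n : ℕ) :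
    (1 + x) ^ n ≤ Real.exp (n * x) := by
  calc (1 + x) ^ n ≤ Real.exp x ^ n :=
        pow_le_pow_left₀ (by linarith) (by linarith [Real.add_one_le_exp x]) n
    _ = Real.exp (n * x) := (Real.exp_nat_mul x n).symm

theorem le_pow_mul_add_sum_of_le_mul_add {u b : ℕ → ℝ} {c : ℝ} {n : ℕ} (hc : 1 ≤ c)
    (hb : ∀ k < n, 0 ≤ b k) (hu : ∀ k < n, u (k + 1) ≤ c * u k + b k) :
    u n ≤ c ^ n * (u 0 + ∑ k ∈ range n, b k) := by
  induction n with
  | zero => simp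
  | succ n ih =>
    have ih := ih (fun k hk => hb k (by omega)) (fun k hk => hu k (by omega))
    have hbn : b n ≤ c ^ (n + 1) * b n :=
      le_mul_of_one_le_left (hb n n.lt_succ_self) (one_le_pow₀ hc)
    calc u (n + 1) ≤ c * u n + b n := hu n n.lt_succ_self
      _ ≤ c * (c ^ n * (u 0 + ∑ k ∈ range n, b k)) + c ^ (n + 1) * b n := by
        gcongr
      _ = c ^ (n + 1) * (u 0 + ∑ k ∈ range (n + 1), b k) := by
        rw [sum_range_succ]; ring

theorem sq_le_one_add_mul_sq_add_of_le_sqrt_add {h δ a s y : ℝ} (hh0 : 0 < h) (hh1 : h ≤ 1)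
    (hδ : δ ^ 2 ≤ h ^ 3) (ha : 0 ≤ a) (hy0 : 0 ≤ y) (hy : y ≤ √(s ^ 2 + h * a) + δ) :
    y ^ 2 ≤ (1 + h) * s ^ 2 + (2 * h * a + 2 * h ^ 2) := by
  have hx : 0 ≤ s ^ 2 + h * a := by positivity
  have hδ' : (1 + h⁻¹) * δ ^ 2 ≤ h ^ 3 + h ^ 2 := by
    calc (1 + h⁻¹) * δ ^ 2 ≤ (1 + h⁻¹) * h ^ 3 := by gcongr
      _ = h ^ 3 + h ^ 2 := by field_simp
  calc y ^ 2 ≤ (√(s ^ 2 + h * a) + δ) ^ 2 := pow_le_pow_left₀ hy0 hy 2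
    _ ≤ (1 + h) * √(s ^ 2 + h * a) ^ 2 + (1 + h⁻¹) * δ ^ 2 :=
      add_sq_le_one_add_mul_sq_add_one_add_inv_mul_sq hh0 _ _
    _ ≤ (1 + h) * (s ^ 2 + h * a) + (h ^ 3 + h ^ 2) := by rw [Real.sq_sqrt hx]; gcongr
    _ ≤ (1 + h) * s ^ 2 + (2 * h * a + 2 * h ^ 2) := by
      nlinarith [mul_le_mul_of_nonneg_right hh1 (mul_nonneg hh0.le ha),
        pow_le_pow_of_le_one hh0.le hh1 (show 2 ≤ 3 by norm_num)]

theorem sum_range_succ_shift_eq_sum_Icc (a : ℕ → ℝ) (n : ℕ) :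
    ∑ k ∈ range n, a (k + 1) = ∑ k ∈ Icc 1 n, a k := by
  rw [range_eq_Ico, sum_Ico_add' a, zero_add, Ico_add_one_right_eq_Icc]

theorem discrete_iteration_bound_general (h δ M : ℝ) (N : ℕ) (hh0 : 0 < h) (hh1 : h ≤ 1)
    (hδ0 : 0 ≤ δ) (hδ : δ ≤ h ^ ((3 : ℝ) / 2)) (hN : 1 ≤ N)
    (a d : ℕ → ℝ) (ha : ∀ k, 1 ≤ k → 0 ≤ a k) (hd : ∀ n, 1 ≤ n → 0 ≤ d n)
    (hsum : ∑ k ∈ Finset.Icc 1 (N - 1), a k ≤ M)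
    (hd1 : d 1 ≤ δ)
    (hrec : ∀ n, 2 ≤ n → n ≤ N → d n ≤ Real.sqrt (d (n - 1) ^ 2 + h * a (n - 1)) + δ) :
    d N ^ 2 ≤ Real.exp ((N : ℝ) * h) * (h ^ 3 + 2 * M * h + 2 * (N : ℝ) * h ^ 2) := by
  obtain ⟨n, rfl⟩ : ∃ n, N = n + 1 := ⟨N - 1, by omega⟩
  have hδ2 : δ ^ 2 ≤ h ^ 3 := sq_le_pow_three_of_le_rpow hh0.le hδ0 hδ
  have hd1sq : d 1 ^ 2 ≤ h ^ 3 := (pow_le_pow_left₀ (hd 1 le_rfl) hd1 2).trans hδ2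
  have hstep : ∀ k < n,
      d (k + 2) ^ 2 ≤ (1 + h) * d (k + 1) ^ 2 + (2 * h * a (k + 1) + 2 * h ^ 2) :=
    fun k hk => sq_le_one_add_mul_sq_add_of_le_sqrt_add hh0 hh1 hδ2 (ha _ (by omega))
      (hd _ (by omega)) (hrec (k + 2) (by omega) (by omega))
  have hgronwall := le_pow_mul_add_sum_of_le_mul_add (u := fun k => d (k + 1) ^ 2)
    (by linarith) (fun k _ => by have := ha (k + 1) (by omega); positivity) hstep
  simp only [sum_add_distrib, ← mul_sum, sum_const, card_range, nsmul_eq_mul, zero_add,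
    sum_range_succ_shift_eq_sum_Icc] at hgronwall
  rw [Nat.add_sub_cancel] at hsum
  have hS : 0 ≤ ∑ k ∈ Icc 1 n, a k := sum_nonneg fun k hk => ha k (mem_Icc.mp hk).1
  calc d (n + 1) ^ 2
      ≤ (1 + h) ^ n * (d 1 ^ 2 + (2 * h * ∑ k ∈ Icc 1 n, a k + 2 * (n * h ^ 2))) := hgronwall
    _ ≤ Real.exp ((n + 1 : ℕ) * h) * (h ^ 3 + 2 * M * h + 2 * (n + 1 : ℕ) * h ^ 2) := by
      gcongr ?_ * ?_
      · calc (1 + h) ^ n ≤ (1 + h) ^ (n + 1) := pow_le_pow_right₀ (by linarith) n.le_succ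
          _ ≤ _ := one_add_pow_le_exp_mul hh0.le _
      · push_cast
        nlinarith [mul_le_mul_of_nonneg_left hsum hh0.le, sq_nonneg h]

/-- Discrete iteration lemma from Step 4 of the proof of Theorem 4.2 of the paper. -/
theorem discrete_iteration_bound (h δ M : ℝ) (N : ℕ) (hh0 : 0 < h) (hh1 : h ≤ 1)
    (hδ0 : 0 ≤ δ) (hδ : δ ≤ h ^ ((3 : ℝ) / 2)) (hM : 0 ≤ M) (hN : 1 ≤ N)
    (a d : ℕ → ℝ) (ha : ∀ k, 1 ≤ k → 0 ≤ a k) (hd : ∀ n, 1 ≤ n → 0 ≤ d n)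
    (hsum : ∑ k ∈ Finset.Icc 1 (N - 1), a k ≤ M)
    (hd1 : d 1 ≤ δ)
    (hrec : ∀ n, 2 ≤ n → n ≤ N → d n ≤ Real.sqrt (d (n - 1) ^ 2 + h * a (n - 1)) + δ) :
    d N ^ 2 ≤ Real.exp ((N : ℝ) * h) * (h ^ 3 + 2 * M * h + 2 * (N : ℝ) * h ^ 2) :=
  discrete_iteration_bound_general h δ M N hh0 hh1 hδ0 hδ hN a d ha hd hsum hd1 hrec
end
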